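/- Let f : [a,b] → ℝ be of bounded variation on [a,b] and symmetric about the line x = (a+b)/2, i.e., f(a+b−x) = f(x) for all x ∈ [a,b]. Then for all x ∈ [a,(a+b)/2], |f(x) − (1/(b−a))∫_a^b f(t) dt| ≤ Q(x), where Q(x) := (1/(b−a)) [ 2((3a+b)/4 − x)·V_x^{a+b−x}(f) + ∫_a^{(a+b)/2} sgn(x−t)·V_t^{a+b−t}(f) dt ]. -/

import Mathlib

open Set

/-- Total variation of `f` on the interval `[c, d]`. -/
noncomputable def V (f : ℝ → ℝ) (c d : ℝ) : ℝ := (eVariationOn f (Set.Icc c d)).toReal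

lemma V_nonneg (f : ℝ → ℝ) (c d : ℝ) : 0 ≤ V f c d := ENNReal.toReal_nonneg

lemma V_eq_vft {a b c d : ℝ} (f : ℝ → ℝ) (hac : a ≤ c) (hcd : c ≤ d) (hdb : d ≤ b) :
    V f c d = variationOnFromTo f (Icc a b) c d := by
  rw [variationOnFromTo.eq_of_le _ _ hcd, V,
    inter_eq_self_of_subset_right (Icc_subset_Icc hac hdb)]

lemma V_add {a b c d e : ℝ} {f : ℝ → ℝ} (hf : BoundedVariationOn f (Icc a b))
    (hac : a ≤ c) (hcd : c ≤ d) (hde : d ≤ e) (heb : e ≤ b) :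
    V f c d + V f d e = V f c e := by
  rw [V_eq_vft f hac hcd (hde.trans heb), V_eq_vft f (hac.trans hcd) hde heb,
    V_eq_vft f hac (hcd.trans hde) heb]
  exact variationOnFromTo.add hf.locallyBoundedVariationOn
    ⟨hac, (hcd.trans hde).trans heb⟩ ⟨hac.trans hcd, hde.trans heb⟩
    ⟨(hac.trans hcd).trans hde, heb⟩

lemma abs_sub_le_V {a b c d : ℝ} {f : ℝ → ℝ} (hf : BoundedVariationOn f (Icc a b))
    (hac : a ≤ c) (hcd : c ≤ d) (hdb : d ≤ b) :
    |f d - f c| ≤ V f c d := by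
  have h := (hf.mono (Icc_subset_Icc hac hdb)).dist_le
    (left_mem_Icc.2 hcd) (right_mem_Icc.2 hcd)
  rw [Real.dist_eq] at h
  rw [abs_sub_comm]
  exact h

/-- Ostrowski type inequality for symmetric functions of bounded variation. -/
theorem ostrowski_symmetric_bv (a b : ℝ) (hab : a < b) (f : ℝ → ℝ)
    (hf : BoundedVariationOn f (Icc a b))
    (hsym : ∀ x ∈ Icc a b, f (a + b - x) = f x) :
    ∀ x ∈ Icc a ((a + b) / 2),
      |f x - (1 / (b - a)) * ∫ t in a..b, f t| ≤
        (1 / (b - a)) * (2 * ((3 * a + b) / 4 - x) * V f x (a + b - x)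
          + ∫ t in a..((a + b) / 2), Real.sign (x - t) * V f t (a + b - t)) := by
  intro x hx
  obtain ⟨hax, hxm⟩ := hx
  set m : ℝ := (a + b) / 2 with hm
  have ham : a ≤ m := by rw [hm]; linarith
  have hmb : m ≤ b := by rw [hm]; linarith
  have hxb : x ≤ b := hxm.trans hmb
  have hba : (0:ℝ) < b - a := by linarith
  -- antitonicity of t ↦ V f t (a+b-t) on [a, m]
  have hGanti : ∀ t t' : ℝ, a ≤ t → t ≤ t' → t' ≤ m →
      V f t' (a + b - t') ≤ V f t (a + b - t) := by
    intro t t' hat htt' htm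
    have h1 : V f t t' + V f t' (a + b - t) = V f t (a + b - t) :=
      V_add hf hat htt' (by rw [hm] at htm; linarith) (by linarith)
    have h2 : V f t' (a + b - t') + V f (a + b - t') (a + b - t) = V f t' (a + b - t) :=
      V_add hf (hat.trans htt') (by rw [hm] at htm; linarith) (by linarith)
        (by linarith)
    have := V_nonneg f t t'
    have := V_nonneg f (a + b - t') (a + b - t)
    linarith
  -- the key pointwise bound
  have hpt : ∀ t ∈ Icc a m, |f x - f t| ≤ |V f t (a + b - t) - V f x (a + b - x)| / 2 := by
    rintro t ⟨hat, htm⟩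
    have htm' : t ≤ a + b - t := by rw [hm] at htm; linarith
    have hxm' : x ≤ a + b - x := by rw [hm] at hxm; linarith
    have hft : f (a + b - t) = f t := hsym t ⟨hat, htm.trans hmb⟩
    have hfx : f (a + b - x) = f x := hsym x ⟨hax, hxb⟩
    rcases le_total t x with htx | hxt
    · -- t ≤ x
      have e1 : V f t x + V f x (a + b - t) = V f t (a + b - t) :=
        V_add hf hat htx (by rw [hm] at hxm; linarith) (by linarith)
      have e2 : V f x (a + b - x) + V f (a + b - x) (a + b - t) = V f x (a + b - t) :=
        V_add hf hax hxm' (by linarith) (by linarith)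
      have b1 : |f x - f t| ≤ V f t x := abs_sub_le_V hf hat htx hxb
      have b2 : |f x - f t| ≤ V f (a + b - x) (a + b - t) := by
        have := abs_sub_le_V hf (c := a + b - x) (d := a + b - t) (by linarith)
          (by linarith) (by linarith)
        rwa [hft, hfx, abs_sub_comm] at this
      have habs : 0 ≤ V f t (a + b - t) - V f x (a + b - x) := by
        have := V_nonneg f t x
        have := V_nonneg f (a + b - x) (a + b - t)
        linarith
      rw [abs_of_nonneg habs]
      linarith
    · -- x ≤ t
      have e1 : V f x t + V f t (a + b - x) = V f x (a + b - x) :=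
        V_add hf hax hxt (by linarith) (by linarith)
      have e2 : V f t (a + b - t) + V f (a + b - t) (a + b - x) = V f t (a + b - x) :=
        V_add hf hat htm' (by linarith) (by linarith)
      have b1 : |f x - f t| ≤ V f x t := by
        have := abs_sub_le_V hf hax hxt (htm.trans hmb)
        rwa [abs_sub_comm] at this
      have b2 : |f x - f t| ≤ V f (a + b - t) (a + b - x) := by
        have := abs_sub_le_V hf (c := a + b - t) (d := a + b - x) (by linarith)
          (by linarith) (by linarith)
        rwa [hft, hfx] at this
      have habs : V f t (a + b - t) - V f x (a + b - x) ≤ 0 := by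
        have := V_nonneg f x t
        have := V_nonneg f (a + b - t) (a + b - x)
        linarith
      rw [abs_of_nonpos habs]
      linarith
  -- integrability of the variation function
  have hGanti' : AntitoneOn (fun t => V f t (a + b - t)) (uIcc a m) := by
    rw [uIcc_of_le ham]
    rintro t ⟨hat, _⟩ t' ⟨_, ht'm⟩ htt'
    exact hGanti t t' hat htt' ht'm
  have hGint : IntervalIntegrable (fun t => V f t (a + b - t)) MeasureTheory.volume a m :=
    hGanti'.intervalIntegrable
  have hxmem : x ∈ uIcc a m := by rw [uIcc_of_le ham]; exact ⟨hax, hxm⟩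
  have hGint1 : IntervalIntegrable (fun t => V f t (a + b - t)) MeasureTheory.volume a x :=
    hGint.mono_set (uIcc_subset_uIcc left_mem_uIcc hxmem)
  have hGint2 : IntervalIntegrable (fun t => V f t (a + b - t)) MeasureTheory.volume x m :=
    hGint.mono_set (uIcc_subset_uIcc hxmem right_mem_uIcc)
  -- integrability of f
  have hfint : IntervalIntegrable f MeasureTheory.volume a b := by
    obtain ⟨p, q, hp, hq, hpq⟩ := hf.locallyBoundedVariationOn.exists_monotoneOn_sub_monotoneOn
    have hp' : MonotoneOn p (uIcc a b) := by rwa [uIcc_of_le hab.le]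
    have hq' : MonotoneOn q (uIcc a b) := by rwa [uIcc_of_le hab.le]
    rw [hpq]
    exact hp'.intervalIntegrable.sub hq'.intervalIntegrable
  have hfint1 : IntervalIntegrable f MeasureTheory.volume a m :=
    hfint.mono_set (by rw [uIcc_of_le ham, uIcc_of_le hab.le]; exact Icc_subset_Icc le_rfl hmb)
  have hfint2 : IntervalIntegrable f MeasureTheory.volume m b :=
    hfint.mono_set (by rw [uIcc_of_le hmb, uIcc_of_le hab.le]; exact Icc_subset_Icc ham le_rfl)
  -- symmetry of the integral
  have hInt1 : ∫ t in m..b, f t = ∫ t in a..m, f t := by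
    have h1 : ∫ t in a..m, f t = ∫ t in a..m, f (a + b - t) := by
      refine (intervalIntegral.integral_congr ?_).symm
      intro t ht
      rw [uIcc_of_le ham] at ht
      exact hsym t ⟨ht.1, ht.2.trans hmb⟩
    have h2 : (∫ t in a..m, f (a + b - t)) = ∫ t in (a + b - m)..(a + b - a), f t :=
      intervalIntegral.integral_comp_sub_left f (a + b)
    have h3 : a + b - m = m := by rw [hm]; ring
    have h4 : a + b - a = b := by ring
    rw [h1, h2, h3, h4]
  -- the sign integral
  have hne : ∀ᵐ t : ℝ, t ≠ x := by
    rw [Filter.eventually_iff, MeasureTheory.mem_ae_iff]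
    have : {t : ℝ | t ≠ x}ᶜ = {x} := by ext t; simp
    rw [this]
    exact Real.volume_singleton
  have hsgn1 : (∫ t in a..x, Real.sign (x - t) * V f t (a + b - t))
      = ∫ t in a..x, V f t (a + b - t) := by
    apply intervalIntegral.integral_congr_ae
    filter_upwards [hne] with t ht hmem
    rw [uIoc_of_le hax] at hmem
    have : 0 < x - t := sub_pos.2 (lt_of_le_of_ne hmem.2 ht)
    rw [Real.sign_of_pos this, one_mul]
  have hsgn2 : (∫ t in x..m, Real.sign (x - t) * V f t (a + b - t))
      = - ∫ t in x..m, V f t (a + b - t) := by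
    rw [← intervalIntegral.integral_neg]
    apply intervalIntegral.integral_congr_ae (MeasureTheory.ae_of_all _ ?_)
    intro t hmem
    rw [uIoc_of_le hxm] at hmem
    have : x - t < 0 := by linarith [hmem.1]
    rw [Real.sign_of_neg this]
    ring
  -- integrability of the sign integrand
  have hsg1 : IntervalIntegrable (fun t => Real.sign (x - t) * V f t (a + b - t))
      MeasureTheory.volume a x := by
    rw [intervalIntegrable_iff] at hGint1 ⊢
    refine hGint1.congr ((MeasureTheory.ae_restrict_iff' measurableSet_uIoc).2 ?_)
    filter_upwards [hne] with t ht hmem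
    rw [uIoc_of_le hax] at hmem
    have : 0 < x - t := sub_pos.2 (lt_of_le_of_ne hmem.2 ht)
    rw [Real.sign_of_pos this, one_mul]
  have hsg2 : IntervalIntegrable (fun t => Real.sign (x - t) * V f t (a + b - t))
      MeasureTheory.volume x m := by
    have hGneg : IntervalIntegrable (fun t => -V f t (a + b - t)) MeasureTheory.volume x m :=
      hGint2.neg
    rw [intervalIntegrable_iff] at hGneg ⊢
    refine hGneg.congr ((MeasureTheory.ae_restrict_iff' measurableSet_uIoc).2
      (MeasureTheory.ae_of_all _ ?_))
    intro t hmem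
    rw [uIoc_of_le hxm] at hmem
    have : x - t < 0 := by linarith [hmem.1]
    dsimp only
    rw [Real.sign_of_neg this]
    ring
  have hS : (∫ t in a..m, Real.sign (x - t) * V f t (a + b - t))
      = (∫ t in a..x, V f t (a + b - t)) - ∫ t in x..m, V f t (a + b - t) := by
    rw [← intervalIntegral.integral_add_adjacent_intervals hsg1 hsg2, hsgn1, hsgn2]
    ring
  -- computing the integral of |V t - V x|/2
  have hGabs_int : IntervalIntegrable
      (fun t => |V f t (a + b - t) - V f x (a + b - x)| / 2) MeasureTheory.volume a m :=
    ((hGint.sub intervalIntegrable_const).abs).div_const 2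
  have hR1 : (∫ t in a..x, |V f t (a + b - t) - V f x (a + b - x)| / 2)
      = ((∫ t in a..x, V f t (a + b - t)) - (x - a) * V f x (a + b - x)) / 2 := by
    have : (∫ t in a..x, |V f t (a + b - t) - V f x (a + b - x)| / 2)
        = ∫ t in a..x, (V f t (a + b - t) - V f x (a + b - x)) / 2 := by
      apply intervalIntegral.integral_congr
      intro t ht
      rw [uIcc_of_le hax] at ht
      dsimp only
      rw [abs_of_nonneg (sub_nonneg.2 (hGanti t x ht.1 ht.2 hxm))]
    rw [this, intervalIntegral.integral_div,
      intervalIntegral.integral_sub hGint1 intervalIntegrable_const,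
      intervalIntegral.integral_const, smul_eq_mul]
  have hR2 : (∫ t in x..m, |V f t (a + b - t) - V f x (a + b - x)| / 2)
      = ((m - x) * V f x (a + b - x) - ∫ t in x..m, V f t (a + b - t)) / 2 := by
    have : (∫ t in x..m, |V f t (a + b - t) - V f x (a + b - x)| / 2)
        = ∫ t in x..m, (V f x (a + b - x) - V f t (a + b - t)) / 2 := by
      apply intervalIntegral.integral_congr
      intro t ht
      rw [uIcc_of_le hxm] at ht
      dsimp only
      rw [abs_of_nonpos (sub_nonpos.2 (hGanti x t hax ht.1 ht.2)), neg_sub]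
    rw [this, intervalIntegral.integral_div,
      intervalIntegral.integral_sub intervalIntegrable_const hGint2,
      intervalIntegral.integral_const, smul_eq_mul]
  have hRsplit : (∫ t in a..m, |V f t (a + b - t) - V f x (a + b - x)| / 2)
      = (∫ t in a..x, |V f t (a + b - t) - V f x (a + b - x)| / 2)
        + ∫ t in x..m, |V f t (a + b - t) - V f x (a + b - x)| / 2 :=
    (intervalIntegral.integral_add_adjacent_intervals
      (hGabs_int.mono_set (uIcc_subset_uIcc left_mem_uIcc hxmem))
      (hGabs_int.mono_set (uIcc_subset_uIcc hxmem right_mem_uIcc))).symm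
  -- comparison of integrals
  have hfabs_int : IntervalIntegrable (fun t => |f x - f t|) MeasureTheory.volume a m :=
    (intervalIntegrable_const.sub hfint1).abs
  have hcmp : (∫ t in a..m, |f x - f t|)
      ≤ ∫ t in a..m, |V f t (a + b - t) - V f x (a + b - x)| / 2 :=
    intervalIntegral.integral_mono_on ham hfabs_int hGabs_int hpt
  -- rewriting the left side
  have heq1 : (b - a) * f x - (∫ t in a..b, f t) = ∫ t in a..b, (f x - f t) := by
    rw [intervalIntegral.integral_sub intervalIntegrable_const hfint,
      intervalIntegral.integral_const, smul_eq_mul]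
  have heq2 : (∫ t in a..b, (f x - f t)) = 2 * ∫ t in a..m, (f x - f t) := by
    rw [← intervalIntegral.integral_add_adjacent_intervals
      (intervalIntegrable_const.sub hfint1) (intervalIntegrable_const.sub hfint2)]
    have h1 : (∫ t in m..b, (f x - f t)) = (b - m) * f x - ∫ t in m..b, f t := by
      rw [intervalIntegral.integral_sub intervalIntegrable_const hfint2,
        intervalIntegral.integral_const, smul_eq_mul]
    have h2 : (∫ t in a..m, (f x - f t)) = (m - a) * f x - ∫ t in a..m, f t := by
      rw [intervalIntegral.integral_sub intervalIntegrable_const hfint1,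
        intervalIntegral.integral_const, smul_eq_mul]
    rw [h1, h2, hInt1]
    have hbm : b - m = m - a := by rw [hm]; ring
    rw [hbm]
    ring
  have hrw : f x - (1 / (b - a)) * ∫ t in a..b, f t
      = (1 / (b - a)) * ((b - a) * f x - ∫ t in a..b, f t) := by
    field_simp
  rw [hrw, abs_mul, abs_of_pos (by positivity : (0:ℝ) < 1 / (b - a))]
  apply mul_le_mul_of_nonneg_left _ (by positivity : (0:ℝ) ≤ 1 / (b - a))
  rw [heq1, heq2, abs_mul, abs_of_nonneg (by norm_num : (0:ℝ) ≤ 2)]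
  have habs1 : |∫ t in a..m, (f x - f t)| ≤ ∫ t in a..m, |f x - f t| :=
    intervalIntegral.abs_integral_le_integral_abs ham
  have hfinal : 2 * (∫ t in a..m, |V f t (a + b - t) - V f x (a + b - x)| / 2)
      = 2 * ((3 * a + b) / 4 - x) * V f x (a + b - x)
        + ∫ t in a..m, Real.sign (x - t) * V f t (a + b - t) := by
    rw [hRsplit, hR1, hR2, hS, hm]
    ring
  linarith
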